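/- If f ∈ L¹ of the unit circle and D_n = det(f_{j-k})_{j,k=0}^{n-1} with f_j the Fourier coefficients of f, then D_n = det(I - K_n), where K_n is the integral operator on L²(C) with kernel K_n(z,z') = [(z/z')^n - 1]/(z - z') · (1 - f(z'))/(2πi). -/

import Mathlib

open MeasureTheory intervalIntegral

/-- Fourier coefficient `f_j = (1/2π)∫_0^{2π} f(e^{iθ}) e^{-ijθ} dθ`. -/
noncomputable def fCoeff (f : ℂ → ℂ) (j : ℤ) : ℂ :=
  (1 / (2 * Real.pi)) *
    ∫ θ in (0:ℝ)..(2 * Real.pi), f (Complex.exp (θ * Complex.I)) * Complex.exp (-j * θ * Complex.I)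

/-- The `n × n` Toeplitz determinant `D_n = det(f_{j-k})_{j,k=0}^{n-1}`. -/
noncomputable def toeplitzDet (f : ℂ → ℂ) (n : ℕ) : ℂ :=
  Matrix.det (Matrix.of fun j k : Fin n => fCoeff f ((j : ℤ) - (k : ℤ)))

/-- The kernel `K_n(z,z') = [((z/z')^n - 1)/(z - z')] (1 - f(z'))/(2πi)`,
with its (removable-singularity) value `n/z · (1-f(z))/(2πi)` on the diagonal. -/
noncomputable def isingKernel (f : ℂ → ℂ) (n : ℕ) (z z' : ℂ) : ℂ :=
  (if z = z' then (n : ℂ) / z else ((z / z') ^ n - 1) / (z - z')) * (1 - f z') /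
    (2 * Real.pi * Complex.I)

/-- The Fredholm determinant `det(I - K)` of an integral operator on `L²(C)` with continuous
kernel `K`, given by its series of multiple contour integrals over the unit circle `C`:
`det(I-K) = ∑_{m≥0} ((-1)^m/m!) ∮⋯∮ det(K(z_i,z_j))_{i,j=1}^m dz_1 ⋯ dz_m`. -/
noncomputable def fredholmDet (K : ℂ → ℂ → ℂ) : ℂ :=
  ∑' m : ℕ, ((-1 : ℂ) ^ m / (Nat.factorial m)) *
    ∫ θ : Fin m → ℝ in Set.pi Set.univ (fun _ : Fin m => Set.Ioc (0:ℝ) (2 * Real.pi)),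
      (Matrix.det (Matrix.of fun i j : Fin m =>
        K (Complex.exp (θ i * Complex.I)) (Complex.exp (θ j * Complex.I)))) *
      ∏ i : Fin m, (Complex.I * Complex.exp (θ i * Complex.I))

/-!
On the unit circle `z = e^{iθ}` the kernel has finite rank: `((z/z')^n - 1)/(z - z')` equals
`z'⁻¹ ∑_{k<n} (z/z')^k` and `dz' = i z' dθ'`, so `K_n(z,z') dz' = ∑_{k<n} u_k(θ) v_k(θ') dθ'`
with `u_k(θ) = z^k` and `v_k(θ') = z'^{-k}(1 - f(z'))/2π`. For a finite-rank kernel the `m`-th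
Fredholm term is, by multilinearity of the determinant and Fubini,
`∑_{r : Fin m → Fin n} det (A_{r i, r j})` with `A_{kl} = ∫ u_l v_k`; only injective `r` count,
each `m`-element set of indices being hit `m!` times, so the series is the expansion of
`det(1 - A)` in principal minors. Finally `A_{kl} = δ_{kl} - f_{k-l}` by orthogonality of the
`z^k`, so `1 - A` is the Toeplitz matrix.
-/

open Finset
open scoped Nat

theorem Finset.sum_filter_image_eq_sum_equiv {ι M : Type*} [Fintype ι] [DecidableEq ι]
    [AddCommMonoid M] {m : ℕ} {s : Finset ι} (hs : #s = m) (F : (Fin m → ι) → M) :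
    ∑ r : Fin m → ι with univ.image r = s, F r = ∑ e : Fin m ≃ s, F (Subtype.val ∘ e) := by
  symm
  refine sum_bij (fun e _ => Subtype.val ∘ e) (fun e _ => mem_filter.mpr ⟨mem_univ _, ?_⟩)
    (fun e _ e' _ h => ?_) (fun r hr => ?_) (fun _ _ => rfl)
  · ext a
    simpa using ⟨fun ⟨i, hi⟩ => hi ▸ (e i).2, fun ha => ⟨e.symm ⟨a, ha⟩, by simp⟩⟩
  · exact Equiv.ext fun i => Subtype.ext (congrFun h i)
  · have hr : univ.image r = s := (mem_filter.mp hr).2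
    have hmem (i : Fin m) : r i ∈ s := hr ▸ mem_image_of_mem r (mem_univ i)
    have hsurj : Function.Surjective fun i => (⟨r i, hmem i⟩ : s) := fun ⟨a, ha⟩ => by
      obtain ⟨i, -, hi⟩ := mem_image.mp (hr ▸ ha)
      exact ⟨i, Subtype.ext hi⟩
    exact ⟨Equiv.ofBijective _ ((Fintype.bijective_iff_surjective_and_card _).mpr
      ⟨hsurj, by simp [hs]⟩), mem_univ _, rfl⟩

namespace Matrix

section CommRing
variable {ι R : Type*} [Fintype ι] [CommRing R]

theorem det_mul_eq_sum_prod_mul_det_submatrix {m : Type*} [Fintype m] [DecidableEq m]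
    (U : Matrix m ι R) (V : Matrix ι m R) :
    det (U * V) = ∑ r : m → ι, (∏ i, U i (r i)) * det (V.submatrix r id) := by
  have hrows : (U * V).row = fun i => ∑ k, U i k • V.row k := by
    ext i j
    simp [mul_apply, Finset.sum_apply]
  change detRowAlternating (U * V).row = _
  rw [hrows, ← AlternatingMap.coe_multilinearMap, MultilinearMap.map_sum]
  refine sum_congr rfl fun r _ => ?_
  rw [AlternatingMap.coe_multilinearMap, detRowAlternating.map_smul_univ (fun i => U i (r i)),
    smul_eq_mul]
  rfl

variable [DecidableEq ι]

theorem det_one_add_eq_sum_det_submatrix (A : Matrix ι ι R) :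
    det (1 + A) = ∑ s : Finset ι, det (A.submatrix (Subtype.val : s → ι) Subtype.val) := by
  rw [add_comm]
  change detRowAlternating (fun i => A i + (1 : Matrix ι ι R) i) = _
  rw [show (fun i => A i + (1 : Matrix ι ι R) i) = A.row + (1 : Matrix ι ι R).row from rfl,
    detRowAlternating.map_add_univ]
  exact sum_congr rfl fun s _ => det_piecewise_one_eq_submatrix_det A s

theorem sum_det_submatrix_eq_factorial_mul (A : Matrix ι ι R) (m : ℕ) :
    ∑ r : Fin m → ι, det (A.submatrix r r) =
      m ! * ∑ s ∈ powersetCard m univ, det (A.submatrix (Subtype.val : s → ι) Subtype.val) := by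
  rw [← sum_fiberwise_of_maps_to (g := fun r : Fin m → ι => univ.image r) (t := univ)
      (fun _ _ => mem_univ _), powersetCard_eq_filter, powerset_univ, sum_filter, mul_sum]
  refine sum_congr rfl fun s _ => ?_
  split_ifs with hs
  · rw [sum_filter_image_eq_sum_equiv hs]
    simp_rw [← submatrix_submatrix, det_submatrix_equiv_self]
    rw [sum_const, card_univ, Fintype.card_equiv (s.equivFinOfCardEq hs).symm, Fintype.card_fin,
      nsmul_eq_mul]
  · rw [mul_zero]
    refine sum_eq_zero fun r hr => ?_
    have hr : ¬ Function.Injective r := fun h => hs <| by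
      rw [← (mem_filter.mp hr).2, card_image_of_injective _ h, card_univ, Fintype.card_fin]
    obtain ⟨i, j, hij, hne⟩ := Function.not_injective_iff.mp hr
    exact det_zero_of_row_eq hne (funext fun k => by simp [hij])

end CommRing

theorem det_one_sub_eq_sum_sum_det_submatrix {ι K : Type*} [Fintype ι] [DecidableEq ι] [Field K]
    [CharZero K] (A : Matrix ι ι K) :
    det (1 - A) = ∑ m ∈ range (Fintype.card ι + 1),
      (-1) ^ m / m ! * ∑ r : Fin m → ι, det (A.submatrix r r) := by
  rw [sub_eq_add_neg, det_one_add_eq_sum_det_submatrix,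
    ← sum_fiberwise_of_maps_to (g := card) (t := range (Fintype.card ι + 1))
      (fun s _ => mem_range_succ_iff.mpr s.card_le_univ)]
  refine sum_congr rfl fun m _ => ?_
  rw [sum_det_submatrix_eq_factorial_mul, ← mul_assoc,
    div_mul_cancel₀ _ (Nat.cast_ne_zero.mpr m.factorial_ne_zero), mul_sum, powersetCard_eq_filter,
    powerset_univ]
  refine sum_congr rfl fun s hs => ?_
  rw [submatrix_neg, Pi.neg_apply, Pi.neg_apply, det_neg, Fintype.card_coe, (mem_filter.mp hs).2]

end Matrix

section Pi
variable {ι 𝕜 : Type*} [Fintype ι] [RCLike 𝕜] {E : ι → Type*} [∀ i, MeasurableSpace (E i)]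
  {μ : ∀ i, Measure (E i)} [∀ i, SigmaFinite (μ i)]

theorem MeasureTheory.integral_univ_pi_prod (s : ∀ i, Set (E i)) (f : ∀ i, E i → 𝕜) :
    ∫ x in Set.univ.pi s, ∏ i, f i (x i) ∂Measure.pi μ = ∏ i, ∫ x in s i, f i x ∂μ i := by
  rw [Measure.restrict_pi_pi, integral_fintype_prod_eq_prod]

theorem MeasureTheory.IntegrableOn.univ_pi_prod {s : ∀ i, Set (E i)} {f : ∀ i, E i → 𝕜}
    (hf : ∀ i, IntegrableOn (f i) (s i) (μ i)) :
    IntegrableOn (fun x => ∏ i, f i (x i)) (Set.univ.pi s) (Measure.pi μ) := by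
  rw [IntegrableOn, Measure.restrict_pi_pi]
  exact Integrable.fintype_prod_dep hf

end Pi

section FiniteRank
open Matrix Real
variable {ι : Type*} [Fintype ι]

/-- The matrix of the operator with kernel `∑ₖ u_k(θ) v_k(θ')` on the span of the `u_l`. -/
noncomputable def pairingMatrix (u v : ι → ℝ → ℂ) : Matrix ι ι ℂ :=
  of fun k l => ∫ θ in Set.Ioc 0 (2 * π), u l θ * v k θ

variable {u v : ι → ℝ → ℂ}

theorem integral_det_sum_mul_eq_sum_det_submatrix
    (huv : ∀ k l, IntegrableOn (fun θ => u l θ * v k θ) (Set.Ioc 0 (2 * π))) (m : ℕ) :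
    ∫ θ : Fin m → ℝ in Set.univ.pi fun _ => Set.Ioc 0 (2 * π),
        det (of fun i j => ∑ k, u k (θ i) * v k (θ j)) =
      ∑ r : Fin m → ι, det ((pairingMatrix u v).submatrix r r) := by
  have hexpand (θ : Fin m → ℝ) : det (of fun i j => ∑ k, u k (θ i) * v k (θ j)) =
      ∑ r : Fin m → ι, ∑ σ : Equiv.Perm (Fin m),
        (σ.sign : ℂ) * ∏ j, u (r j) (θ j) * v (r (σ j)) (θ j) := by
    rw [show of (fun i j => ∑ k, u k (θ i) * v k (θ j)) =
        of (fun i k => u k (θ i)) * of (fun k j => v k (θ j)) from by ext; simp [mul_apply],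
      det_mul_eq_sum_prod_mul_det_submatrix]
    refine sum_congr rfl fun r _ => ?_
    rw [det_apply', mul_sum]
    refine sum_congr rfl fun σ _ => ?_
    simp only [submatrix_apply, of_apply, id, prod_mul_distrib]
    ring
  have hint (r : Fin m → ι) (σ : Equiv.Perm (Fin m)) : IntegrableOn
      (fun θ : Fin m → ℝ => (σ.sign : ℂ) * ∏ j, u (r j) (θ j) * v (r (σ j)) (θ j))
      (Set.univ.pi fun _ => Set.Ioc 0 (2 * π)) :=
    (IntegrableOn.univ_pi_prod fun j => huv (r (σ j)) (r j)).const_mul _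
  simp_rw [hexpand]
  rw [integral_finsetSum _ fun r _ => integrable_finsetSum _ fun σ _ => hint r σ]
  refine sum_congr rfl fun r _ => ?_
  rw [integral_finsetSum _ fun σ _ => hint r σ, det_apply']
  refine sum_congr rfl fun σ _ => ?_
  rw [MeasureTheory.integral_const_mul]
  exact congrArg _ (integral_univ_pi_prod (μ := fun _ => volume) (fun _ => Set.Ioc 0 (2 * π))
    fun j θ => u (r j) θ * v (r (σ j)) θ)

theorem fredholmDet_eq_det_one_sub_pairingMatrix [DecidableEq ι] (K : ℂ → ℂ → ℂ)
    (hK : ∀ θ θ' : ℝ, K (Complex.exp (θ * Complex.I)) (Complex.exp (θ' * Complex.I)) *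
      (Complex.I * Complex.exp (θ' * Complex.I)) = ∑ k, u k θ * v k θ')
    (huv : ∀ k l, IntegrableOn (fun θ => u l θ * v k θ) (Set.Ioc 0 (2 * π))) :
    fredholmDet K = det (1 - pairingMatrix u v) := by
  have hterm (m : ℕ) (θ : Fin m → ℝ) :
      det (of fun i j => K (Complex.exp (θ i * Complex.I)) (Complex.exp (θ j * Complex.I))) *
        ∏ i, (Complex.I * Complex.exp (θ i * Complex.I)) =
      det (of fun i j => ∑ k, u k (θ i) * v k (θ j)) := by
    rw [mul_comm, ← det_mul_row]
    congr 1
    ext i j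
    simp only [of_apply]
    rw [mul_comm, hK]
  rw [fredholmDet, det_one_sub_eq_sum_sum_det_submatrix]
  simp_rw [hterm, integral_det_sum_mul_eq_sum_det_submatrix huv]
  refine tsum_eq_sum fun m hm => ?_
  rw [sum_det_submatrix_eq_factorial_mul, powersetCard_eq_empty.mpr, sum_empty, mul_zero,
    mul_zero]
  simpa using hm

end FiniteRank

section Ising
open Real Complex

theorem integral_exp_int_mul_I (j : ℤ) :
    ∫ θ in (0 : ℝ)..2 * π, exp (j * θ * I) = if j = 0 then 2 * π else 0 := by
  split_ifs with hj
  · simp [hj]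
  have hc : (j * I : ℂ) ≠ 0 := mul_ne_zero (Int.cast_ne_zero.mpr hj) I_ne_zero
  simp_rw [mul_right_comm _ _ I, integral_exp_mul_complex hc]
  rw [show (j : ℂ) * I * ↑(2 * π) = j * (2 * π * I) by push_cast; ring, exp_int_mul_two_pi_mul_I]
  simp

theorem isingKernel_mul_eq_geom_sum (f : ℂ → ℂ) (n : ℕ) {z z' : ℂ} (hz' : z' ≠ 0) :
    isingKernel f n z z' * (I * z') = (∑ k ∈ range n, (z / z') ^ k) * (1 - f z') / (2 * π) := by
  have hgeom : (if z = z' then (n : ℂ) / z else ((z / z') ^ n - 1) / (z - z')) * z' =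
      ∑ k ∈ range n, (z / z') ^ k := by
    split_ifs with h
    · simp [h, hz']
    · rw [geom_sum_eq (by rwa [Ne, div_eq_one_iff_eq hz'])]
      field_simp [sub_ne_zero.mpr h]
  rw [isingKernel, ← hgeom]
  field_simp [I_ne_zero, Real.pi_ne_zero]

noncomputable def isingU (k : ℕ) (θ : ℝ) : ℂ := exp (θ * I) ^ k

noncomputable def isingV (f : ℂ → ℂ) (k : ℕ) (θ : ℝ) : ℂ :=
  (exp (θ * I) ^ k)⁻¹ * (1 - f (exp (θ * I))) / (2 * π)

theorem isingKernel_exp_mul_eq_sum (f : ℂ → ℂ) (n : ℕ) (θ θ' : ℝ) :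
    isingKernel f n (exp (θ * I)) (exp (θ' * I)) * (I * exp (θ' * I)) =
      ∑ k : Fin n, isingU k θ * isingV f k θ' := by
  rw [isingKernel_mul_eq_geom_sum f n (Complex.exp_ne_zero _), sum_mul, sum_div,
    ← Fin.sum_univ_eq_sum_range]
  refine sum_congr rfl fun k _ => ?_
  simp only [isingU, isingV, div_pow]
  ring

theorem isingU_mul_isingV (f : ℂ → ℂ) (k l : ℕ) (θ : ℝ) :
    isingU l θ * isingV f k θ =
      (1 - f (exp (θ * I))) * exp (-((k - l : ℤ) : ℂ) * θ * I) / (2 * π) := by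
  rw [← Int.cast_neg, neg_sub, mul_assoc, exp_int_mul, zpow_sub₀ (Complex.exp_ne_zero _),
    zpow_natCast, zpow_natCast, isingU, isingV]
  ring

theorem integrableOn_isingU_mul_isingV {f : ℂ → ℂ}
    (hf : IntervalIntegrable (fun θ : ℝ => f (exp (θ * I))) volume 0 (2 * π)) (k l : ℕ) :
    IntegrableOn (fun θ => isingU l θ * isingV f k θ) (Set.Ioc 0 (2 * π)) := by
  rw [← intervalIntegrable_iff_integrableOn_Ioc_of_le two_pi_pos.le]
  simp_rw [isingU_mul_isingV]
  exact ((intervalIntegrable_const.sub hf).mul_continuousOn (by fun_prop)).div_const _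

theorem integral_isingU_mul_isingV {f : ℂ → ℂ}
    (hf : IntervalIntegrable (fun θ : ℝ => f (exp (θ * I))) volume 0 (2 * π)) (k l : ℕ) :
    ∫ θ in Set.Ioc 0 (2 * π), isingU l θ * isingV f k θ =
      (if k = l then 1 else 0) - fCoeff f (k - l) := by
  rw [← intervalIntegral.integral_of_le two_pi_pos.le]
  simp_rw [isingU_mul_isingV, sub_mul, one_mul, sub_div]
  rw [intervalIntegral.integral_sub, intervalIntegral.integral_div, intervalIntegral.integral_div,
    ← Int.cast_neg, integral_exp_int_mul_I, Int.cast_neg, fCoeff, one_div_mul_eq_div]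
  · congr 1
    split_ifs <;> first | omega | simp [Real.pi_ne_zero]
  · exact (by fun_prop : Continuous _).intervalIntegrable _ _
  · exact (hf.mul_continuousOn (by fun_prop)).div_const _

theorem one_sub_pairingMatrix_isingU_isingV {f : ℂ → ℂ}
    (hf : IntervalIntegrable (fun θ : ℝ => f (exp (θ * I))) volume 0 (2 * π)) (n : ℕ) :
    1 - pairingMatrix (fun k : Fin n => isingU k) (fun k => isingV f k) =
      Matrix.of fun j k : Fin n => fCoeff f ((j : ℤ) - (k : ℤ)) := by
  ext k l
  rw [Matrix.sub_apply, pairingMatrix, Matrix.of_apply, integral_isingU_mul_isingV hf,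
    Matrix.one_apply, Matrix.of_apply]
  simp only [Fin.val_inj, sub_sub_cancel]

end Ising

/-- If `f ∈ L¹(C)` then the Toeplitz determinant `D_n = det(f_{j-k})_{j,k=0}^{n-1}` equals the
Fredholm determinant `det(I - K_n)` of the integral operator on `L²(C)` with kernel
`K_n(z,z') = [(z/z')^n - 1]/(z-z') · (1-f(z'))/(2πi)`. -/
theorem toeplitzDet_eq_fredholmDet (f : ℂ → ℂ)
    (hf : IntervalIntegrable (fun θ : ℝ => f (Complex.exp (θ * Complex.I))) volume 0 (2 * Real.pi))
    (n : ℕ) :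
    toeplitzDet f n = fredholmDet (isingKernel f n) := by
  rw [toeplitzDet, ← one_sub_pairingMatrix_isingU_isingV hf,
    fredholmDet_eq_det_one_sub_pairingMatrix _ (isingKernel_exp_mul_eq_sum f n)
      fun k l => integrableOn_isingU_mul_isingV hf k l]
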